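/- For every K > 1 and every ε ∈ (0,1) there exists K′ > 1 with the following property. Let u : ℝP¹ → ℝP¹ be an orientation-preserving homeomorphism (a homeomorphism preserving the standard cyclic order) such that cr(u(a),u(b),u(c),u(d)) ∈ [−K, −1/K] for every 4-tuple (a,b,c,d) of pairwise distinct points in symmetric position. Then cr(u(a),u(b),u(c),u(d)) ∈ [−K′, −1/K′] for every 4-tuple (a,b,c,d) of pairwise distinct points in ε-symmetric position; in particular, the restriction of u to any finite subset F ⊆ ℝP¹ is (K′,ε)-quasi-symmetric. -/

import Mathlib

/- ℝP¹ = ℝ ∪ {∞} (one-point compactification), cross-ratio, cyclic order,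
   discrete quasi-symmetric maps. -/

noncomputable section
open Set

/-- The real value of a point of `ℝP¹ = ℝ ∪ {∞}` (junk value `0` at `∞`). -/
def rv (x : OnePoint ℝ) : ℝ := Option.getD x 0

open Classical in
/-- Cross-ratio `cr(a,b,c,d) = ((a−b)(c−d))/((a−d)(c−b))` on `ℝP¹ = ℝ ∪ {∞}`,
extended by the usual limiting conventions when one point is `∞`; in particular
`cr(−1,0,1,∞) = −1`. -/
def crossRatio (a b c d : OnePoint ℝ) : ℝ :=
  if a = OnePoint.infty then (rv c - rv d) / (rv c - rv b)
  else if b = OnePoint.infty then (rv c - rv d) / (rv a - rv d)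
  else if c = OnePoint.infty then (rv a - rv b) / (rv a - rv d)
  else if d = OnePoint.infty then (rv a - rv b) / (rv c - rv b)
  else ((rv a - rv b) * (rv c - rv d)) / ((rv a - rv d) * (rv c - rv b))

/-- `a, b, c, d` are pairwise distinct. -/
def Distinct4 (a b c d : OnePoint ℝ) : Prop :=
  a ≠ b ∧ a ≠ c ∧ a ≠ d ∧ b ≠ c ∧ b ≠ d ∧ c ≠ d

/-- The closed arc of `ℝP¹ = ℝ ∪ {∞}` from `x` to `y` in the counterclockwise
(increasing) direction, wrapping through `∞`. -/
def arcCcw (x y : OnePoint ℝ) : Set (OnePoint ℝ) :=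
  {z | ∃ a b c : ℝ, x = (a : OnePoint ℝ) ∧ y = (b : OnePoint ℝ) ∧ z = (c : OnePoint ℝ) ∧
        ((a ≤ b ∧ a ≤ c ∧ c ≤ b) ∨ (b < a ∧ (a ≤ c ∨ c ≤ b)))} ∪
  {z | z = OnePoint.infty ∧
        (x = OnePoint.infty ∨ y = OnePoint.infty ∨
         ∃ a b : ℝ, x = (a : OnePoint ℝ) ∧ y = (b : OnePoint ℝ) ∧ b < a)} ∪
  {z | ∃ a c : ℝ, x = (a : OnePoint ℝ) ∧ y = OnePoint.infty ∧ z = (c : OnePoint ℝ) ∧ a ≤ c} ∪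
  {z | ∃ b c : ℝ, x = OnePoint.infty ∧ y = (b : OnePoint ℝ) ∧ z = (c : OnePoint ℝ) ∧ c ≤ b}

/-- The standard cyclic betweenness on `ℝP¹`: `b` lies on the closed
counterclockwise arc from `a` to `c`. -/
def CBtw (a b c : OnePoint ℝ) : Prop := b ∈ arcCcw a c

/-- `f` weakly preserves the standard cyclic order on the subset `F` of `ℝP¹`
(an "increasing" map). -/
def IncreasingOn (F : Set (OnePoint ℝ)) (f : OnePoint ℝ → OnePoint ℝ) : Prop :=
  ∀ a ∈ F, ∀ b ∈ F, ∀ c ∈ F, CBtw a b c → CBtw (f a) (f b) (f c)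

/-- `f` weakly preserves the standard cyclic order of `ℝP¹`. -/
def CyclicMono (f : OnePoint ℝ → OnePoint ℝ) : Prop :=
  ∀ a b c : OnePoint ℝ, CBtw a b c → CBtw (f a) (f b) (f c)

/-- `v` is `(K,ε)`-quasi-symmetric on the (finite) set `F`: it is increasing on `F`
and sends 4-tuples of points of `F` in `ε`-symmetric position
(`cr ∈ [−1−ε, −1+ε]`) to 4-tuples with cross-ratio in `[−K, −1/K]`. -/
def IsQSOn (K ε : ℝ) (F : Set (OnePoint ℝ)) (v : OnePoint ℝ → OnePoint ℝ) : Prop :=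
  IncreasingOn F v ∧
  ∀ a ∈ F, ∀ b ∈ F, ∀ c ∈ F, ∀ d ∈ F, Distinct4 a b c d →
    crossRatio a b c d ∈ Set.Icc (-1 - ε) (-1 + ε) →
    crossRatio (v a) (v b) (v c) (v d) ∈ Set.Icc (-K) (-1 / K)
/-! Möbius transformations preserve cross-ratios, and preserve or reverse the cyclic order according
to the sign of their determinant. Normalise the tuple by `g` with `a, b, d ↦ -1, 0, ∞` and its image
by `h` with `u a, u b, u d ↦ -1, 0, ∞`; then `v = h ∘ u ∘ g⁻¹` fixes `-1, 0, ∞`, so it cannot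
reverse the cyclic order, and it restricts to an increasing `f : ℝ → ℝ`. Now `cr(a,b,c,d) = -1/s`
with `s = g c`, and `ε`-symmetry puts `s` in `[2⁻ⁿ, 2ⁿ]` once `1/(1-ε) ≤ 2ⁿ`. The symmetric tuples
`(0, x, 2x, ∞)` give `f (2x) ≤ (1 + K) f x` and `(-1, 0, 1, ∞)` gives `f 1 ∈ [1/K, K]`, so
`f s ∈ [1/K', K']` with `K' = K (1 + K)ⁿ`, and `cr(u a, u b, u c, u d) = -1 / f s`. -/

open OnePoint Matrix

@[simp] lemma rv_coe (t : ℝ) : rv t = t := rfl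

lemma coe_rv {z : OnePoint ℝ} (hz : z ≠ ∞) : ((rv z : ℝ) : OnePoint ℝ) = z := by
  cases z
  · exact absurd rfl hz
  · rfl

lemma Distinct4.map {f : OnePoint ℝ → OnePoint ℝ} (hf : Function.Injective f)
    {a b c d : OnePoint ℝ} (h : Distinct4 a b c d) : Distinct4 (f a) (f b) (f c) (f d) := by
  obtain ⟨hab, hac, had, hbc, hbd, hcd⟩ := h
  exact ⟨hf.ne hab, hf.ne hac, hf.ne had, hf.ne hbc, hf.ne hbd, hf.ne hcd⟩

lemma crossRatio_coe_coe_coe_infty (x y z : ℝ) : crossRatio x y z ∞ = (x - y) / (z - y) := by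
  simp [crossRatio]

def homCoord (x : OnePoint ℝ) : Fin 2 → ℝ := x.elim ![1, 0] fun t => ![t, 1]

def wedge (x y : OnePoint ℝ) : ℝ := homCoord x 0 * homCoord y 1 - homCoord x 1 * homCoord y 0

@[simp] lemma homCoord_infty : homCoord ∞ = ![1, 0] := rfl

@[simp] lemma homCoord_coe (t : ℝ) : homCoord t = ![t, 1] := rfl

lemma homCoord_ne_zero (x : OnePoint ℝ) : homCoord x ≠ 0 := by
  cases x <;> simp [funext_iff, Fin.forall_fin_two]

@[simp] lemma wedge_coe_coe (s t : ℝ) : wedge s t = s - t := by simp [wedge]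

@[simp] lemma wedge_infty_coe (t : ℝ) : wedge ∞ t = 1 := by simp [wedge]

@[simp] lemma wedge_coe_infty (t : ℝ) : wedge t ∞ = -1 := by simp [wedge]

@[simp] lemma wedge_self (x : OnePoint ℝ) : wedge x x = 0 := by simp [wedge]; ring

lemma wedge_comm (x y : OnePoint ℝ) : wedge y x = -wedge x y := by simp only [wedge]; ring

lemma wedge_eq_zero_iff {x y : OnePoint ℝ} : wedge x y = 0 ↔ x = y := by
  cases x <;> cases y <;> simp [sub_eq_zero, eq_comm]

lemma crossRatio_eq_wedge {a b c d : OnePoint ℝ} (h : Distinct4 a b c d) :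
    crossRatio a b c d = wedge a b * wedge c d / (wedge a d * wedge c b) := by
  obtain ⟨hab, hac, had, hbc, hbd, hcd⟩ := h
  cases a <;> cases b <;> cases c <;> cases d <;> simp_all [crossRatio, mul_comm] <;>
    rw [← neg_div_neg_eq, neg_sub, neg_sub]

def orient (a b c : OnePoint ℝ) : ℝ := wedge a b * wedge b c * wedge c a

lemma orient_swap (a b c : OnePoint ℝ) : orient c b a = -orient a b c := by
  simp only [orient, wedge_comm c b, wedge_comm b a, wedge_comm a c]; ring

lemma arc_condition_iff_mul_pos (x y z : ℝ) :
    x ≤ z ∧ x ≤ y ∧ y ≤ z ∨ z < x ∧ (x ≤ y ∨ y ≤ z) ↔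
      x = y ∨ y = z ∨ 0 < (x - y) * (y - z) * (z - x) := by
  simp only [mul_pos_iff, mul_neg_iff, sub_pos, sub_neg]
  grind

lemma cbtw_iff {a b c : OnePoint ℝ} : CBtw a b c ↔ a = b ∨ b = c ∨ 0 < orient a b c := by
  cases a <;> cases b <;> cases c <;> simp [CBtw, arcCcw, orient] <;>
    first | exact le_iff_eq_or_lt | exact arc_condition_iff_mul_pos _ _ _

lemma cbtw_coe_coe_infty {x y : ℝ} : CBtw x y ∞ ↔ x ≤ y := by
  simp [CBtw, arcCcw]

def ofHomCoord (v : Fin 2 → ℝ) : OnePoint ℝ := if v 1 = 0 then ∞ else ↑(v 0 / v 1)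

lemma exists_homCoord_ofHomCoord {v : Fin 2 → ℝ} (hv : v ≠ 0) :
    ∃ c : ℝ, c ≠ 0 ∧ homCoord (ofHomCoord v) = c • v := by
  by_cases h : v 1 = 0
  · have h0 : v 0 ≠ 0 := fun h0 => hv (by ext i; fin_cases i <;> assumption)
    exact ⟨(v 0)⁻¹, inv_ne_zero h0, by ext i; fin_cases i <;> simp [ofHomCoord, h, h0]⟩
  · exact ⟨(v 1)⁻¹, inv_ne_zero h, by
      ext i; fin_cases i <;> simp [ofHomCoord, h, div_eq_inv_mul]⟩

section GLAction

variable (g : GL (Fin 2) ℝ)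

lemma smul_eq_ofHomCoord (x : OnePoint ℝ) : g • x = ofHomCoord (g • homCoord x) := by
  cases x <;> simp [smul_infty_eq_ite, smul_some_eq_ite, ofHomCoord]

lemma exists_homCoord_smul (x : OnePoint ℝ) :
    ∃ c : ℝ, c ≠ 0 ∧ homCoord (g • x) = c • g • homCoord x := by
  rw [smul_eq_ofHomCoord]
  exact exists_homCoord_ofHomCoord ((smul_ne_zero_iff_ne g).2 (homCoord_ne_zero x))

lemma exists_wedge_smul : ∃ c : OnePoint ℝ → ℝ, (∀ x, c x ≠ 0) ∧
    ∀ x y, wedge (g • x) (g • y) = c x * c y * g.val.det * wedge x y := by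
  choose c hc0 hc using exists_homCoord_smul g
  refine ⟨c, hc0, fun x y => ?_⟩
  simp only [wedge, hc, GeneralLinearGroup.fin_two_smul, det_fin_two]
  simp
  ring

lemma crossRatio_smul {a b c d : OnePoint ℝ} (h : Distinct4 a b c d) :
    crossRatio (g • a) (g • b) (g • c) (g • d) = crossRatio a b c d := by
  obtain ⟨k, hk0, hk⟩ := exists_wedge_smul g
  rw [crossRatio_eq_wedge h, crossRatio_eq_wedge (h.map (MulAction.injective g)), hk, hk, hk, hk]
  have hk4 : k a * k b * k c * k d * g.val.det ^ 2 ≠ 0 := by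
    have := g.det_ne_zero
    have := hk0 a; have := hk0 b; have := hk0 c; have := hk0 d
    positivity
  convert mul_div_mul_left (wedge a b * wedge c d) (wedge a d * wedge c b) hk4 using 1
  ring

lemma orient_smul_pos_iff {a b c : OnePoint ℝ} :
    0 < orient (g • a) (g • b) (g • c) ↔ 0 < g.val.det * orient a b c := by
  obtain ⟨k, hk0, hk⟩ := exists_wedge_smul g
  have horient : orient (g • a) (g • b) (g • c) =
      (k a * k b * k c * g.val.det) ^ 2 * (g.val.det * orient a b c) := by
    simp only [orient, hk]; ring
  have := g.det_ne_zero
  have := hk0 a; have := hk0 b; have := hk0 c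
  rw [horient, mul_pos_iff_of_pos_left (by positivity)]

lemma cbtw_smul_iff {a b c : OnePoint ℝ} :
    CBtw (g • a) (g • b) (g • c) ↔ a = b ∨ b = c ∨ 0 < g.val.det * orient a b c := by
  rw [cbtw_iff, smul_left_cancel_iff, smul_left_cancel_iff, orient_smul_pos_iff]

lemma cbtw_smul (hg : 0 < g.val.det) {a b c : OnePoint ℝ} (h : CBtw a b c) :
    CBtw (g • a) (g • b) (g • c) := by
  rwa [cbtw_smul_iff, mul_pos_iff_of_pos_left hg, ← cbtw_iff]

lemma cbtw_smul_swap (hg : g.val.det < 0) {a b c : OnePoint ℝ} (h : CBtw a b c) :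
    CBtw (g • c) (g • b) (g • a) := by
  rw [cbtw_smul_iff, orient_swap, mul_neg, ← neg_mul, mul_pos_iff_of_pos_left (neg_pos.2 hg)]
  rw [cbtw_iff] at h
  rcases h with h | h | h
  exacts [.inr (.inl h.symm), .inl h.symm, .inr (.inr h)]

end GLAction

lemma exists_smul_eq_neg_one_zero_infty {a b d : OnePoint ℝ} (hab : a ≠ b) (had : a ≠ d)
    (hbd : b ≠ d) :
    ∃ g : GL (Fin 2) ℝ, g • a = ((-1 : ℝ) : OnePoint ℝ) ∧ g • b = ((0 : ℝ) : OnePoint ℝ) ∧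
      g • d = ∞ := by
  have hab' : wedge a b ≠ 0 := wedge_eq_zero_iff.not.2 hab
  have had' : wedge a d ≠ 0 := wedge_eq_zero_iff.not.2 had
  have hbd' : wedge b d ≠ 0 := wedge_eq_zero_iff.not.2 hbd
  set t := -wedge a d / wedge a b
  let M : Matrix (Fin 2) (Fin 2) ℝ :=
    !![t * homCoord b 1, -(t * homCoord b 0); homCoord d 1, -homCoord d 0]
  have hM : M.det ≠ 0 := by
    have : M.det = t * wedge b d := by simp [M, det_fin_two, wedge]; ring
    rw [this]
    exact mul_ne_zero (div_ne_zero (neg_ne_zero.2 had') hab') hbd'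
  let g := GeneralLinearGroup.mkOfDetNeZero M hM
  have hg : ∀ x, g • x = ofHomCoord ![t * wedge x b, wedge x d] := by
    intro x
    rw [smul_eq_ofHomCoord]
    congr 1
    ext i; fin_cases i <;> simp [g, M, GeneralLinearGroup.mkOfDetNeZero, wedge] <;> ring
  refine ⟨g, ?_, ?_, ?_⟩
  · simp [hg, ofHomCoord, had']
    field_simp
    exact div_mul_cancel₀ _ hab'
  · simp [hg, ofHomCoord, hbd']
  · simp [hg, ofHomCoord]

lemma CyclicMono.smul_comp_smul {u : OnePoint ℝ → OnePoint ℝ} (hu : CyclicMono u)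
    {g h : GL (Fin 2) ℝ} (hm1 : h • u (g • ((-1 : ℝ) : OnePoint ℝ)) = ((-1 : ℝ) : OnePoint ℝ))
    (h0 : h • u (g • ((0 : ℝ) : OnePoint ℝ)) = ((0 : ℝ) : OnePoint ℝ))
    (hinf : h • u (g • ∞) = ∞) :
    CyclicMono fun x => h • u (g • x) := by
  have hbtw : CBtw ((-1 : ℝ) : OnePoint ℝ) ((0 : ℝ) : OnePoint ℝ) ∞ :=
    cbtw_coe_coe_infty.2 (by norm_num)
  have hnot : ¬CBtw ∞ ((0 : ℝ) : OnePoint ℝ) ((-1 : ℝ) : OnePoint ℝ) := by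
    rw [cbtw_iff]; norm_num [orient]
  rcases g.det_ne_zero.lt_or_gt with hg | hg <;> rcases h.det_ne_zero.lt_or_gt with hh | hh
  · exact fun x y z hxyz => cbtw_smul_swap h hh (hu _ _ _ (cbtw_smul_swap g hg hxyz))
  · have := cbtw_smul h hh (hu _ _ _ (cbtw_smul_swap g hg hbtw))
    rw [hm1, h0, hinf] at this
    exact absurd this hnot
  · have := cbtw_smul_swap h hh (hu _ _ _ (cbtw_smul g hg hbtw))
    rw [hm1, h0, hinf] at this
    exact absurd this hnot
  · exact fun x y z hxyz => cbtw_smul h hh (hu _ _ _ (cbtw_smul g hg hxyz))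

lemma neg_one_div_mem_Icc_iff {M T : ℝ} (hT : 0 < T) (hM : 0 < M) :
    -1 / T ∈ Icc (-M) (-1 / M) ↔ T ∈ Icc M⁻¹ M := by
  simp only [mem_Icc, neg_div, neg_le_neg_iff, one_div, inv_le_comm₀ hT hM, inv_le_inv₀ hM hT,
    and_comm]

lemma mem_Icc_of_neg_one_div_mem_Icc {ε s : ℝ} {n : ℕ} (hε : ε < 1) (hn : 1 / (1 - ε) ≤ 2 ^ n)
    (h : -1 / s ∈ Icc (-1 - ε) (-1 + ε)) : s ∈ Icc ((2 ^ n)⁻¹) (2 ^ n) := by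
  have hs : 0 < s := by
    by_contra! hs
    linarith [h.2, div_nonneg_of_nonpos (show (-1 : ℝ) ≤ 0 by norm_num) hs]
  have h1ε : 0 < 1 - ε := by linarith
  have hn' : (2 ^ n)⁻¹ ≤ 1 - ε := by
    rw [inv_le_comm₀ (by positivity) h1ε, ← one_div]; exact hn
  have hn'' : 1 + ε ≤ 2 ^ n := by
    refine le_trans ?_ hn
    rw [le_div_iff₀ h1ε]; nlinarith [sq_nonneg ε]
  refine (neg_one_div_mem_Icc_iff hs (by positivity)).1 ⟨?_, ?_⟩
  · linarith [h.1]
  · have := h.2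
    simp only [neg_div, one_div] at this ⊢
    linarith

section MidpointBounded

variable {K : ℝ} {f : ℝ → ℝ}

/-- The Beurling–Ahlfors condition `(f (x + t) - f x) / (f x - f (x - t)) ∈ [1/K, K]`, written as
the cross-ratio of `(x - t, x, x + t, ∞)` after applying `f`. -/
def MidpointBounded (K : ℝ) (f : ℝ → ℝ) : Prop :=
  ∀ x t : ℝ, 0 < t → (f (x - t) - f x) / (f (x + t) - f x) ∈ Icc (-K) (-1 / K)

lemma MidpointBounded.pos_and_two_mul_le (hK : 0 < K) (hf : MidpointBounded K f)
    (hmono : Monotone f) (h0 : f 0 = 0) {x : ℝ} (hx : 0 < x) :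
    0 < f x ∧ f (2 * x) ≤ (1 + K) * f x := by
  have h := hf x x hx
  rw [sub_self, h0, ← two_mul, zero_sub] at h
  have hfx : 0 ≤ f x := h0 ▸ hmono hx.le
  have hD : 0 ≤ f (2 * x) - f x := sub_nonneg.2 (hmono (by linarith))
  have hr : -f x / (f (2 * x) - f x) < 0 := h.2.trans_lt (by simp [neg_div, hK])
  have hD' : 0 < f (2 * x) - f x := hD.lt_of_ne fun h' => by simp [← h'] at hr
  have hfx' : 0 < f x := hfx.lt_of_ne fun h' => by simp [← h'] at hr
  refine ⟨hfx', ?_⟩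
  have := h.2
  rw [div_le_div_iff₀ hD' hK] at this
  nlinarith

lemma MidpointBounded.pow_mul_le (hK : 0 < K) (hf : MidpointBounded K f) (hmono : Monotone f)
    (h0 : f 0 = 0) {x : ℝ} (hx : 0 < x) (n : ℕ) : f (2 ^ n * x) ≤ (1 + K) ^ n * f x := by
  induction n with
  | zero => simp
  | succ n ih =>
    calc f (2 ^ (n + 1) * x) = f (2 * (2 ^ n * x)) := by ring_nf
      _ ≤ (1 + K) * f (2 ^ n * x) := (hf.pos_and_two_mul_le hK hmono h0 (by positivity)).2
      _ ≤ (1 + K) * ((1 + K) ^ n * f x) := by gcongr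
      _ = (1 + K) ^ (n + 1) * f x := by ring

lemma MidpointBounded.mem_Icc (hK : 0 < K) (hf : MidpointBounded K f) (hmono : Monotone f)
    (h0 : f 0 = 0) (h1 : f (-1) = -1) {n : ℕ} {s : ℝ} (hs : s ∈ Icc ((2 ^ n)⁻¹) (2 ^ n)) :
    f s ∈ Icc (K * (1 + K) ^ n)⁻¹ (K * (1 + K) ^ n) := by
  have hf1 : f 1 ∈ Icc K⁻¹ K := by
    have h := hf 0 1 one_pos
    rw [zero_sub, zero_add, h0, h1, sub_zero, sub_zero] at h
    exact (neg_one_div_mem_Icc_iff (hf.pos_and_two_mul_le hK hmono h0 one_pos).1 hK).1 h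
  have h2n : (0 : ℝ) < 2 ^ n := by positivity
  have hup := hf.pow_mul_le hK hmono h0 one_pos n
  have hlow := hf.pow_mul_le hK hmono h0 (inv_pos.2 h2n) n
  rw [mul_one] at hup
  rw [mul_inv_cancel₀ h2n.ne'] at hlow
  have hKn : (0 : ℝ) < (1 + K) ^ n := by positivity
  constructor
  · calc (K * (1 + K) ^ n)⁻¹ = K⁻¹ / (1 + K) ^ n := by rw [mul_inv, div_eq_mul_inv]
      _ ≤ f 1 / (1 + K) ^ n := by gcongr; exact hf1.1
      _ ≤ f (2 ^ n)⁻¹ := by rw [div_le_iff₀ hKn]; linarith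
      _ ≤ f s := hmono hs.1
  · calc f s ≤ f (2 ^ n) := hmono hs.2
      _ ≤ (1 + K) ^ n * f 1 := hup
      _ ≤ (1 + K) ^ n * K := by gcongr; exact hf1.2
      _ = K * (1 + K) ^ n := mul_comm _ _

end MidpointBounded

lemma crossRatio_neg_one_zero_mem_Icc {K : ℝ} (hK : 0 < K) {v : OnePoint ℝ → OnePoint ℝ}
    (hinj : Function.Injective v) (hmono : CyclicMono v)
    (hm1 : v ((-1 : ℝ) : OnePoint ℝ) = ((-1 : ℝ) : OnePoint ℝ))
    (h0 : v ((0 : ℝ) : OnePoint ℝ) = ((0 : ℝ) : OnePoint ℝ)) (hinf : v ∞ = ∞)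
    (hsym : ∀ a b c d, Distinct4 a b c d → crossRatio a b c d = -1 →
      crossRatio (v a) (v b) (v c) (v d) ∈ Icc (-K) (-1 / K))
    {n : ℕ} {s : ℝ} (hs : s ∈ Icc ((2 ^ n)⁻¹) (2 ^ n)) :
    crossRatio ((-1 : ℝ) : OnePoint ℝ) ((0 : ℝ) : OnePoint ℝ) (v s) ∞ ∈
      Icc (-(K * (1 + K) ^ n)) (-1 / (K * (1 + K) ^ n)) := by
  set f : ℝ → ℝ := fun x => rv (v x)
  have hv : ∀ x : ℝ, v x = f x := fun x =>
    (coe_rv fun hx => OnePoint.coe_ne_infty x (hinj (hx.trans hinf.symm))).symm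
  have hfmono : Monotone f := fun x y hxy => by
    have := hmono _ _ _ (cbtw_coe_coe_infty.2 hxy)
    rwa [hinf, hv, hv, cbtw_coe_coe_infty] at this
  have hf : MidpointBounded K f := fun x t ht => by
    have hd : Distinct4 ((x - t : ℝ) : OnePoint ℝ) x ((x + t : ℝ) : OnePoint ℝ) ∞ := by
      refine ⟨?_, ?_, coe_ne_infty _, ?_, coe_ne_infty _, coe_ne_infty _⟩ <;>
        rw [Ne, coe_eq_coe] <;> intro h <;> linarith
    have := hsym _ _ _ _ hd (by
      rw [crossRatio_coe_coe_coe_infty, sub_sub_cancel_left, add_sub_cancel_left, neg_div,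
        div_self ht.ne'])
    rwa [hv, hv, hv, hinf, crossRatio_coe_coe_coe_infty] at this
  have hfs := hf.mem_Icc hK hfmono (by simp [f, h0]) (by simp [f, hm1]) hs
  rw [hv, crossRatio_coe_coe_coe_infty, sub_zero, sub_zero]
  exact (neg_one_div_mem_Icc_iff (lt_of_lt_of_le (by positivity) hfs.1) (by positivity)).2 hfs

lemma crossRatio_mem_of_eps_symmetric {K ε : ℝ} (hK : 0 < K) (hε : ε < 1) {n : ℕ}
    (hn : 1 / (1 - ε) ≤ 2 ^ n) {u : OnePoint ℝ → OnePoint ℝ} (hinj : Function.Injective u)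
    (hu : CyclicMono u)
    (hsym : ∀ a b c d, Distinct4 a b c d → crossRatio a b c d = -1 →
      crossRatio (u a) (u b) (u c) (u d) ∈ Icc (-K) (-1 / K))
    {a b c d : OnePoint ℝ} (hd : Distinct4 a b c d)
    (hcr : crossRatio a b c d ∈ Icc (-1 - ε) (-1 + ε)) :
    crossRatio (u a) (u b) (u c) (u d) ∈ Icc (-(K * (1 + K) ^ n)) (-1 / (K * (1 + K) ^ n)) := by
  obtain ⟨hab, -, had, -, hbd, hcd⟩ := id hd
  obtain ⟨g, hga, hgb, hgd⟩ := exists_smul_eq_neg_one_zero_infty hab had hbd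
  obtain ⟨h, hha, hhb, hhd⟩ :=
    exists_smul_eq_neg_one_zero_infty (hinj.ne hab) (hinj.ne had) (hinj.ne hbd)
  set v : OnePoint ℝ → OnePoint ℝ := fun x => h • u (g⁻¹ • x)
  have hvg : ∀ x, v (g • x) = h • u x := fun x => by simp [v]
  have hvinj : Function.Injective v :=
    (MulAction.injective h).comp (hinj.comp (MulAction.injective g⁻¹))
  have hm1 : v ((-1 : ℝ) : OnePoint ℝ) = ((-1 : ℝ) : OnePoint ℝ) := by
    simpa only [hga, hha] using hvg a
  have h0 : v ((0 : ℝ) : OnePoint ℝ) = ((0 : ℝ) : OnePoint ℝ) := by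
    simpa only [hgb, hhb] using hvg b
  have hinf : v ∞ = ∞ := by simpa only [hgd, hhd] using hvg d
  have hvsym : ∀ a b c d, Distinct4 a b c d → crossRatio a b c d = -1 →
      crossRatio (v a) (v b) (v c) (v d) ∈ Icc (-K) (-1 / K) := fun a' b' c' d' hd' hcr' => by
    have hd'' := hd'.map (MulAction.injective g⁻¹)
    rw [crossRatio_smul h (hd''.map hinj)]
    exact hsym _ _ _ _ hd'' (by rw [crossRatio_smul _ hd']; exact hcr')
  obtain ⟨s, hs⟩ : ∃ s : ℝ, g • c = s :=
    ⟨rv (g • c), (coe_rv (hgd ▸ (MulAction.injective g).ne hcd)).symm⟩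
  rw [← crossRatio_smul g hd, hga, hgb, hs, hgd, crossRatio_coe_coe_coe_infty, sub_zero,
    sub_zero] at hcr
  rw [← crossRatio_smul h (hd.map hinj), hha, hhb, hhd, ← hvg, hs]
  exact crossRatio_neg_one_zero_mem_Icc hK hvinj (hu.smul_comp_smul hm1 h0 hinf) hm1 h0 hinf
    hvsym (mem_Icc_of_neg_one_div_mem_Icc hε hn hcr)

/-- For every `K > 1` and `ε ∈ (0,1)` there is `K′ > 1` such that
every orientation-preserving homeomorphism `u` of `ℝP¹` sending symmetric 4-tuples
(`cr = −1`) to 4-tuples with cross-ratio in `[−K, −1/K]` also sends `ε`-symmetric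
4-tuples (`cr ∈ [−1−ε, −1+ε]`) to 4-tuples with cross-ratio in `[−K′, −1/K′]`;
in particular the restriction of `u` to any finite subset `F ⊆ ℝP¹` is
`(K′,ε)`-quasi-symmetric. -/
theorem quasisymmetric_eps_symmetric_tuples
    (K : ℝ) (hK : 1 < K) (ε : ℝ) (hε : ε ∈ Set.Ioo (0 : ℝ) 1) :
    ∃ K' : ℝ, 1 < K' ∧
      ∀ u : OnePoint ℝ ≃ₜ OnePoint ℝ, CyclicMono u →
        (∀ a b c d : OnePoint ℝ, Distinct4 a b c d → crossRatio a b c d = -1 →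
          crossRatio (u a) (u b) (u c) (u d) ∈ Set.Icc (-K) (-1 / K)) →
        ((∀ a b c d : OnePoint ℝ, Distinct4 a b c d →
            crossRatio a b c d ∈ Set.Icc (-1 - ε) (-1 + ε) →
            crossRatio (u a) (u b) (u c) (u d) ∈ Set.Icc (-K') (-1 / K')) ∧
          ∀ F : Set (OnePoint ℝ), F.Finite → IsQSOn K' ε F u) := by
  obtain ⟨n, hn⟩ := pow_unbounded_of_one_lt (1 / (1 - ε)) one_lt_two
  refine ⟨K * (1 + K) ^ n, one_lt_mul_of_lt_of_le hK (one_le_pow₀ (by linarith)),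
    fun u hu hsym => ?_⟩
  have hcr : ∀ a b c d, Distinct4 a b c d → crossRatio a b c d ∈ Icc (-1 - ε) (-1 + ε) →
      crossRatio (u a) (u b) (u c) (u d) ∈ Icc (-(K * (1 + K) ^ n)) (-1 / (K * (1 + K) ^ n)) :=
    fun a b c d hd =>
      crossRatio_mem_of_eps_symmetric (by linarith) hε.2 hn.le u.injective hu hsym hd
  exact ⟨hcr, fun F _ => ⟨fun a _ b _ c _ => hu a b c, fun a _ b _ c _ d _ => hcr a b c d⟩⟩

end
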